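/- arXiv:2306.11460 — 5 statements merged into one kernel-verified Lean document; each statement's English description precedes it below -/
import Mathlib

section
/- For an n-dimensional simplex S ⊂ R^n, the Minkowski asymmetry equals n, i.e., s(S) = n. -/
open Set Pointwise

/-- The Minkowski asymmetry of a set `K`:
`s(K) = inf {ρ > 0 : ∃ c, K − c ⊆ ρ (c − K)}`. -/
noncomputable def minkAsym {V : Type*} [AddCommGroup V] [Module ℝ V] (K : Set V) : ℝ :=
  sInf {ρ : ℝ | 0 < ρ ∧ ∃ c : V, ∀ x ∈ K, ∃ y ∈ K, x - c = ρ • (c - y)}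

/-- For an affine map into ℝ, the relation `x - c = ρ • (c - y)` is preserved. -/
lemma affine_rel {V : Type*} [NormedAddCommGroup V] [NormedSpace ℝ V]
    (f : V →ᵃ[ℝ] ℝ) {x c y : V} {ρ : ℝ} (h : x - c = ρ • (c - y)) :
    f x - f c = ρ • (f c - f y) := by
  have h1 : f x - f c = f.linear (x - c) := (f.linearMap_vsub x c).symm
  have h2 : f c - f y = f.linear (c - y) := (f.linearMap_vsub c y).symm
  rw [h1, h, map_smul, ← h2]

/-- For an `n`-dimensional simplex `S ⊆ ℝⁿ` (the convex hull of `n+1`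
affinely independent points), the Minkowski asymmetry equals `n`. -/
theorem minkAsym_simplex {n : ℕ} (hn : 1 ≤ n)
    (v : Fin (n + 1) → EuclideanSpace ℝ (Fin n)) (hv : AffineIndependent ℝ v) :
    minkAsym (convexHull ℝ (Set.range v)) = n := by
  classical
  have hnR : (0:ℝ) < n := by exact_mod_cast hn
  have hn1R : (0:ℝ) < (n:ℝ) + 1 := by linarith
  have htop : affineSpan ℝ (Set.range v) = ⊤ := by
    rw [hv.affineSpan_eq_top_iff_card_eq_finrank_add_one]
    simp [finrank_euclideanSpace_fin]
  let b : AffineBasis (Fin (n + 1)) ℝ (EuclideanSpace ℝ (Fin n)) := ⟨v, hv, htop⟩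
  have hb : (b : Fin (n+1) → EuclideanSpace ℝ (Fin n)) = v := rfl
  have hmem : ∀ x, x ∈ convexHull ℝ (Set.range v) ↔ ∀ i, 0 ≤ b.coord i x := by
    intro x
    rw [← hb, b.convexHull_eq_nonneg_coord]
    rfl
  -- the centroid
  set c : EuclideanSpace ℝ (Fin n) :=
    Finset.univ.affineCombination ℝ v (fun _ => ((n:ℝ) + 1)⁻¹) with hc
  have hsumw : (Finset.univ.sum fun _ : Fin (n+1) => ((n:ℝ) + 1)⁻¹) = 1 := by
    simp [Finset.sum_const, Finset.card_univ]
    field_simp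
  have hcoordc : ∀ i, b.coord i c = ((n:ℝ) + 1)⁻¹ := fun i =>
    b.coord_apply_combination_of_mem (Finset.mem_univ i) hsumw
  -- n is in the set
  have hn_mem : (n:ℝ) ∈ {ρ : ℝ | 0 < ρ ∧ ∃ c : EuclideanSpace ℝ (Fin n),
      ∀ x ∈ convexHull ℝ (Set.range v), ∃ y ∈ convexHull ℝ (Set.range v),
        x - c = ρ • (c - y)} := by
    refine ⟨hnR, c, fun x hx => ?_⟩
    refine ⟨c - ((n:ℝ))⁻¹ • (x - c), ?_, ?_⟩
    · rw [hmem]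
      intro i
      have hrel : b.coord i x - b.coord i c =
          (n:ℝ) • (b.coord i c - b.coord i (c - ((n:ℝ))⁻¹ • (x - c))) := by
        apply affine_rel
        rw [sub_sub_cancel, smul_inv_smul₀ (ne_of_gt hnR)]
      have hxle : b.coord i x ≤ 1 := by
        have hsum := b.sum_coord_apply_eq_one x
        have hnn := (hmem x).mp hx
        calc b.coord i x ≤ ∑ j, b.coord j x :=
              Finset.single_le_sum (fun j _ => hnn j) (Finset.mem_univ i)
          _ = 1 := hsum
      have hci := hcoordc i
      rw [hci] at hrel
      have : b.coord i (c - ((n:ℝ))⁻¹ • (x - c)) =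
          ((n:ℝ) + 1)⁻¹ - (b.coord i x - ((n:ℝ)+1)⁻¹) / n := by
        rw [smul_eq_mul] at hrel
        field_simp at hrel ⊢
        linarith
      rw [this]
      have : ((n:ℝ) + 1)⁻¹ - (b.coord i x - ((n:ℝ)+1)⁻¹) / n = (1 - b.coord i x) / n := by
        field_simp
        ring
      rw [this]
      apply div_nonneg (by linarith) (le_of_lt hnR)
    · rw [sub_sub_cancel, smul_inv_smul₀ (ne_of_gt hnR)]
  -- n is a lower bound
  have hlb : ∀ ρ ∈ {ρ : ℝ | 0 < ρ ∧ ∃ c : EuclideanSpace ℝ (Fin n),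
      ∀ x ∈ convexHull ℝ (Set.range v), ∃ y ∈ convexHull ℝ (Set.range v),
        x - c = ρ • (c - y)}, (n:ℝ) ≤ ρ := by
    rintro ρ ⟨hρ, d, hd⟩
    have key : ∀ i, 1 ≤ (ρ + 1) * b.coord i d := by
      intro i
      have hvi : v i ∈ convexHull ℝ (Set.range v) :=
        subset_convexHull ℝ _ ⟨i, rfl⟩
      obtain ⟨y, hy, hrel⟩ := hd (v i) hvi
      have h1 : b.coord i (v i) = 1 := by
        rw [← hb]; exact b.coord_apply_eq i
      have h2 : 0 ≤ b.coord i y := (hmem y).mp hy i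
      have h3 := affine_rel (b.coord i) hrel
      rw [h1, smul_eq_mul] at h3
      nlinarith
    have hsum : ∑ i, b.coord i d = 1 := b.sum_coord_apply_eq_one d
    have : ((n:ℝ) + 1) ≤ (ρ + 1) * 1 := by
      calc ((n:ℝ) + 1) = ∑ _i : Fin (n+1), (1:ℝ) := by
            simp [Finset.sum_const, Finset.card_univ]
        _ ≤ ∑ i, (ρ + 1) * b.coord i d := Finset.sum_le_sum fun i _ => key i
        _ = (ρ + 1) * ∑ i, b.coord i d := by rw [Finset.mul_sum]
        _ = (ρ + 1) * 1 := by rw [hsum]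
    linarith
  unfold minkAsym
  exact le_antisymm (csInf_le ⟨(n:ℝ), hlb⟩ hn_mem) (le_csInf ⟨(n:ℝ), hn_mem⟩ hlb)
end

section
/- For K_t = conv{(±1,0),(±1,−1),(0,t)} with t ∈ [0,φ) and x_t = (0,(t−s)/(s+1)) where s = (t + sqrt(9t² + 12t + 4))/(2(t+1)), one has K_t − x_t ⊂ s·(−(K_t − x_t)), and this containment is optimal, so s(K_t) = s. -/
open Set Pointwise

private lemma comb2 {S : Set (ℝ × ℝ)} {u w : ℝ × ℝ} (hu : u ∈ S) (hw : w ∈ S)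
    {a b : ℝ} (ha : 0 ≤ a) (hb : 0 ≤ b) (hab : a + b = 1) :
    a • u + b • w ∈ convexHull ℝ S :=
  (convex_convexHull ℝ S) (subset_convexHull ℝ S hu) (subset_convexHull ℝ S hw) ha hb hab

/-- For `K_t = conv{(±1,0),(±1,−1),(0,t)}` with `t ∈ [0,φ)`,
`s = (t + √(9t² + 12t + 4))/(2(t+1))` and `x_t = (0,(t−s)/(s+1))`, one has
`K_t − x_t ⊆ s · (x_t − K_t)`, and this containment is optimal, i.e. `s(K_t) = s`. -/
theorem minkAsym_house (t : ℝ) (ht : t ∈ Set.Ico (0 : ℝ) ((1 + Real.sqrt 5) / 2)) :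
    let s : ℝ := (t + Real.sqrt (9 * t ^ 2 + 12 * t + 4)) / (2 * (t + 1))
    let xt : ℝ × ℝ := (0, (t - s) / (s + 1))
    let Kt : Set (ℝ × ℝ) :=
      convexHull ℝ {((1 : ℝ), (0 : ℝ)), (-1, 0), (1, -1), (-1, -1), (0, t)}
    (∀ x ∈ Kt, ∃ y ∈ Kt, x - xt = s • (xt - y)) ∧ minkAsym Kt = s := by
  obtain ⟨ht0, -⟩ := ht
  intro s xt Kt
  have h2t : (0:ℝ) < 2*t+1 := by linarith
  have ht1 : (0:ℝ) < t+1 := by linarith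
  have h3t : (0:ℝ) < 3*t+2 := by linarith
  have hs0 : s = (t + Real.sqrt (9 * t ^ 2 + 12 * t + 4)) / (2 * (t + 1)) := rfl
  have hs : s = (2*t+1)/(t+1) := by
    rw [hs0, show 9*t^2+12*t+4 = (3*t+2)^2 by ring, Real.sqrt_sq (by linarith)]
    field_simp
    ring
  have hspos : 0 < s := by rw [hs]; positivity
  have hs1 : s + 1 = (3*t+2)/(t+1) := by rw [hs]; field_simp; ring
  have hne1 : (t+1:ℝ) ≠ 0 := ht1.ne'
  have hne2 : (2*t+1:ℝ) ≠ 0 := h2t.ne'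
  have hne3 : (3*t+2:ℝ) ≠ 0 := h3t.ne'
  have hxt : xt = ((0:ℝ), (t^2 - t - 1)/(3*t+2)) := by
    have hxt0 : xt = ((0:ℝ), (t - s)/(s+1)) := rfl
    rw [hxt0, hs1, hs, Prod.mk.injEq]
    exact ⟨rfl, by field_simp; ring⟩
  have hsinv : s⁻¹ = (t+1)/(2*t+1) := by rw [hs, inv_div]
  -- vertices
  set V : Set (ℝ×ℝ) := {((1 : ℝ), (0 : ℝ)), (-1, 0), (1, -1), (-1, -1), (0, t)} with hV
  have hA : ((1:ℝ),(0:ℝ)) ∈ V := by simp [hV]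
  have hB : ((-1:ℝ),(0:ℝ)) ∈ V := by simp [hV]
  have hC : ((1:ℝ),(-1:ℝ)) ∈ V := by simp [hV]
  have hD : ((-1:ℝ),(-1:ℝ)) ∈ V := by simp [hV]
  have hE : ((0:ℝ),t) ∈ V := by simp [hV]
  have hKt : Kt = convexHull ℝ V := rfl
  have hcoe1 : (0:ℝ) ≤ t/(2*t+1) := by positivity
  have hcoe2 : (0:ℝ) ≤ (t+1)/(2*t+1) := by positivity
  have hcoesum : t/(2*t+1) + (t+1)/(2*t+1) = 1 := by field_simp; ring
  -- the homothety maps Kt into Kt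
  have hpre : Kt ⊆ (AffineMap.homothety xt (-s⁻¹)) ⁻¹' Kt := by
    rw [hKt]
    apply convexHull_min _ ((convex_convexHull ℝ V).affine_preimage _)
    intro v hv
    simp only [hV, mem_insert_iff, mem_singleton_iff] at hv
    rcases hv with rfl|rfl|rfl|rfl|rfl <;>
      simp only [mem_preimage, AffineMap.homothety_apply, vsub_eq_sub, vadd_eq_add]
    · -- h(A) = (t/(2t+1)) • E + ((t+1)/(2t+1)) • D
      have : (-s⁻¹) • (((1:ℝ),(0:ℝ)) - xt) + xt
          = (t/(2*t+1)) • ((0:ℝ),t) + ((t+1)/(2*t+1)) • ((-1:ℝ),(-1:ℝ)) := by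
        rw [hxt, hsinv]
        simp only [Prod.mk_sub_mk, Prod.smul_mk, Prod.mk_add_mk, Prod.mk.injEq, smul_eq_mul]
        constructor <;> (field_simp; try ring)
      rw [this]; exact comb2 hE hD hcoe1 hcoe2 hcoesum
    · -- h(B) = (t/(2t+1)) • E + ((t+1)/(2t+1)) • C
      have : (-s⁻¹) • (((-1:ℝ),(0:ℝ)) - xt) + xt
          = (t/(2*t+1)) • ((0:ℝ),t) + ((t+1)/(2*t+1)) • ((1:ℝ),(-1:ℝ)) := by
        rw [hxt, hsinv]
        simp only [Prod.mk_sub_mk, Prod.smul_mk, Prod.mk_add_mk, Prod.mk.injEq, smul_eq_mul]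
        constructor <;> (field_simp; try ring)
      rw [this]; exact comb2 hE hC hcoe1 hcoe2 hcoesum
    · -- h(C) = ((t+1)/(2t+1)) • B + (t/(2t+1)) • E
      have : (-s⁻¹) • (((1:ℝ),(-1:ℝ)) - xt) + xt
          = ((t+1)/(2*t+1)) • ((-1:ℝ),(0:ℝ)) + (t/(2*t+1)) • ((0:ℝ),t) := by
        rw [hxt, hsinv]
        simp only [Prod.mk_sub_mk, Prod.smul_mk, Prod.mk_add_mk, Prod.mk.injEq, smul_eq_mul]
        constructor <;> (field_simp; try ring)
      rw [this]; exact comb2 hB hE hcoe2 hcoe1 (by linarith [hcoesum])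
    · -- h(D) = ((t+1)/(2t+1)) • A + (t/(2t+1)) • E
      have : (-s⁻¹) • (((-1:ℝ),(-1:ℝ)) - xt) + xt
          = ((t+1)/(2*t+1)) • ((1:ℝ),(0:ℝ)) + (t/(2*t+1)) • ((0:ℝ),t) := by
        rw [hxt, hsinv]
        simp only [Prod.mk_sub_mk, Prod.smul_mk, Prod.mk_add_mk, Prod.mk.injEq, smul_eq_mul]
        constructor <;> (field_simp; try ring)
      rw [this]; exact comb2 hA hE hcoe2 hcoe1 (by linarith [hcoesum])
    · -- h(E) = (1/2) • C + (1/2) • D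
      have : (-s⁻¹) • (((0:ℝ),t) - xt) + xt
          = ((1:ℝ)/2) • ((1:ℝ),(-1:ℝ)) + ((1:ℝ)/2) • ((-1:ℝ),(-1:ℝ)) := by
        rw [hxt, hsinv]
        simp only [Prod.mk_sub_mk, Prod.smul_mk, Prod.mk_add_mk, Prod.mk.injEq, smul_eq_mul]
        constructor <;> (field_simp; try ring)
      rw [this]; exact comb2 hC hD (by norm_num) (by norm_num) (by norm_num)
  have hcont : ∀ x ∈ Kt, ∃ y ∈ Kt, x - xt = s • (xt - y) := by
    intro x hx
    refine ⟨xt + s⁻¹ • (xt - x), ?_, ?_⟩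
    · have h2 : xt + s⁻¹ • (xt - x) = AffineMap.homothety xt (-s⁻¹) x := by
        rw [AffineMap.homothety_apply, vsub_eq_sub, vadd_eq_add, neg_smul, ← smul_neg,
          neg_sub, add_comm]
      rw [h2]; exact hpre hx
    · have h1 : xt - (xt + s⁻¹ • (xt - x)) = s⁻¹ • (x - xt) := by
        rw [sub_add_eq_sub_sub, sub_self, zero_sub, ← smul_neg, neg_sub]
      rw [h1, smul_smul, mul_inv_cancel₀ hspos.ne', one_smul]
  refine ⟨hcont, ?_⟩
  -- bounds valid on all of Kt
  have hb1 : ∀ y ∈ Kt, (-1:ℝ) ≤ y.2 := by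
    rw [hKt]
    intro y hy
    refine convexHull_min ?_ (convex_halfSpace_ge (f := fun p : ℝ×ℝ => p.2)
      ⟨fun x y => rfl, fun c x => by simp⟩ (-1)) hy
    intro p hp
    simp only [hV, mem_insert_iff, mem_singleton_iff] at hp
    rcases hp with rfl|rfl|rfl|rfl|rfl <;> (simp; try linarith)
  have hb2 : ∀ y ∈ Kt, -t ≤ t * y.1 - y.2 := by
    rw [hKt]
    intro y hy
    refine convexHull_min ?_ (convex_halfSpace_ge (f := fun p : ℝ×ℝ => t * p.1 - p.2)
      ⟨fun x y => by simp; ring, fun c x => by simp [smul_eq_mul]; ring⟩ (-t)) hy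
    intro p hp
    simp only [hV, mem_insert_iff, mem_singleton_iff] at hp
    rcases hp with rfl|rfl|rfl|rfl|rfl <;> (simp; try linarith)
  have hb3 : ∀ y ∈ Kt, -t ≤ -t * y.1 - y.2 := by
    rw [hKt]
    intro y hy
    refine convexHull_min ?_ (convex_halfSpace_ge (f := fun p : ℝ×ℝ => -t * p.1 - p.2)
      ⟨fun x y => by simp; ring, fun c x => by simp [smul_eq_mul]; ring⟩ (-t)) hy
    intro p hp
    simp only [hV, mem_insert_iff, mem_singleton_iff] at hp
    rcases hp with rfl|rfl|rfl|rfl|rfl <;> (simp; try linarith)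
  -- lower bound for every admissible ρ
  have hlb : ∀ ρ ∈ {ρ : ℝ | 0 < ρ ∧ ∃ c : ℝ×ℝ, ∀ x ∈ Kt, ∃ y ∈ Kt, x - c = ρ • (c - y)},
      s ≤ ρ := by
    rintro ρ ⟨hρ0, c, hc⟩
    obtain ⟨yE, hyE, heqE⟩ := hc ((0:ℝ),t) (subset_convexHull ℝ V hE)
    obtain ⟨yC, hyC, heqC⟩ := hc ((1:ℝ),(-1:ℝ)) (subset_convexHull ℝ V hC)
    obtain ⟨yD, hyD, heqD⟩ := hc ((-1:ℝ),(-1:ℝ)) (subset_convexHull ℝ V hD)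
    have eE2 : t - c.2 = ρ * (c.2 - yE.2) := by
      have := congrArg Prod.snd heqE; simpa using this
    have eC1 : 1 - c.1 = ρ * (c.1 - yC.1) := by
      have := congrArg Prod.fst heqC; simpa using this
    have eC2 : -1 - c.2 = ρ * (c.2 - yC.2) := by
      have := congrArg Prod.snd heqC; simpa using this
    have eD1 : -1 - c.1 = ρ * (c.1 - yD.1) := by
      have := congrArg Prod.fst heqD; simpa using this
    have eD2 : -1 - c.2 = ρ * (c.2 - yD.2) := by
      have := congrArg Prod.snd heqD; simpa using this
    have bE := hb1 yE hyE
    have bC := hb2 yC hyC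
    have bD := hb3 yD hyD
    have hE' : ρ * (yE.2 + 1) ≥ 0 := mul_nonneg hρ0.le (by linarith)
    have hC' : ρ * (t * yC.1 - yC.2 + t) ≥ 0 := mul_nonneg hρ0.le (by linarith)
    have hD' : ρ * (-t * yD.1 - yD.2 + t) ≥ 0 := mul_nonneg hρ0.le (by linarith)
    have eC1' : t - t * c.1 = ρ * (t * c.1) - ρ * (t * yC.1) := by
      linear_combination t * eC1
    have eD1' : t + t * c.1 = -(ρ * (t * c.1)) + ρ * (t * yD.1) := by
      linear_combination (-t) * eD1
    -- derive 2t+1 ≤ ρ (t+1)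
    rw [hs, div_le_iff₀ ht1]
    linarith [eE2, eC2, eD2, eC1', eD1', hE', hC', hD']
  have hmem : s ∈ {ρ : ℝ | 0 < ρ ∧ ∃ c : ℝ×ℝ, ∀ x ∈ Kt, ∃ y ∈ Kt, x - c = ρ • (c - y)} :=
    ⟨hspos, xt, hcont⟩
  exact le_antisymm (csInf_le ⟨s, hlb⟩ hmem) (le_csInf ⟨s, hmem⟩ hlb)
end

section
/- Let GH = conv{(1,0),(−1,0),(1,−1),(−1,−1),(0,φ)} ⊂ R^2 with φ = (1+√5)/2 the golden ratio. Then GH is Minkowski centered with s(GH) = φ, i.e., GH ⊂ φ·(−GH) optimally with 0 being a Minkowski center. -/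
open Set Pointwise

/-- The golden house `GH = conv{(1,0),(−1,0),(1,−1),(−1,−1),(0,φ)}`
is Minkowski centered with `s(GH) = φ`, i.e. `GH ⊆ φ · (−GH)` and `0` is a Minkowski
center (optimality being the equality `s(GH) = φ`). -/
theorem goldenHouse_minkAsym :
    let φ : ℝ := (1 + Real.sqrt 5) / 2
    let GH : Set (ℝ × ℝ) :=
      convexHull ℝ {((1 : ℝ), (0 : ℝ)), (-1, 0), (1, -1), (-1, -1), (0, φ)}
    GH ⊆ φ • (-GH) ∧ minkAsym GH = φ := by
  intro φ GH
  have h5 : Real.sqrt 5 ^ 2 = 5 := Real.sq_sqrt (by norm_num)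
  have h5' : Real.sqrt 5 ≥ 0 := Real.sqrt_nonneg 5
  have hφ2 : φ ^ 2 = φ + 1 := by
    show ((1 + Real.sqrt 5)/2) ^ 2 = ((1 + Real.sqrt 5)/2) + 1
    linear_combination h5/4
  have hφ1 : 1 < φ := by show (1:ℝ) < (1 + Real.sqrt 5)/2; nlinarith
  have hφ0 : 0 < φ := lt_trans one_pos hφ1
  have hφ2' : φ ≤ 2 := by nlinarith
  have hGHc : Convex ℝ GH := convex_convexHull ℝ _
  have hA : ((1:ℝ),(0:ℝ)) ∈ GH := subset_convexHull ℝ _ (by simp)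
  have hB : ((-1:ℝ),(0:ℝ)) ∈ GH := subset_convexHull ℝ _ (by simp)
  have hC : ((1:ℝ),(-1:ℝ)) ∈ GH := subset_convexHull ℝ _ (by simp)
  have hD : ((-1:ℝ),(-1:ℝ)) ∈ GH := subset_convexHull ℝ _ (by simp)
  have hE : ((0:ℝ), φ) ∈ GH := subset_convexHull ℝ _ (by simp)
  have huA : ((1-φ, (0:ℝ)) : ℝ × ℝ) ∈ GH := by
    have hm := hGHc hB hA (by positivity : (0:ℝ) ≤ φ/2) (by linarith : (0:ℝ) ≤ 1 - φ/2) (by ring)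
    have he : ((1-φ, (0:ℝ)) : ℝ × ℝ) = (φ/2) • ((-1:ℝ),(0:ℝ)) + (1-φ/2) • ((1:ℝ),(0:ℝ)) := by
      simp only [Prod.smul_mk, Prod.mk_add_mk, smul_eq_mul, Prod.mk.injEq]
      constructor
      · ring
      · ring
    rw [he]; exact hm
  have huB : ((φ-1, (0:ℝ)) : ℝ × ℝ) ∈ GH := by
    have hm := hGHc hA hB (by positivity : (0:ℝ) ≤ φ/2) (by linarith : (0:ℝ) ≤ 1 - φ/2) (by ring)
    have he : ((φ-1, (0:ℝ)) : ℝ × ℝ) = (φ/2) • ((1:ℝ),(0:ℝ)) + (1-φ/2) • ((-1:ℝ),(0:ℝ)) := by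
      simp only [Prod.smul_mk, Prod.mk_add_mk, smul_eq_mul, Prod.mk.injEq]
      constructor
      · ring
      · ring
    rw [he]; exact hm
  have huC : ((1-φ, φ-1) : ℝ × ℝ) ∈ GH := by
    have hm := hGHc hE hB (by linarith : (0:ℝ) ≤ 2-φ) (by linarith : (0:ℝ) ≤ φ-1) (by ring)
    have he : ((1-φ, φ-1) : ℝ × ℝ) = (2-φ) • ((0:ℝ), φ) + (φ-1) • ((-1:ℝ),(0:ℝ)) := by
      simp only [Prod.smul_mk, Prod.mk_add_mk, smul_eq_mul, Prod.mk.injEq]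
      constructor
      · ring
      · linear_combination hφ2
    rw [he]; exact hm
  have huD : ((φ-1, φ-1) : ℝ × ℝ) ∈ GH := by
    have hm := hGHc hE hA (by linarith : (0:ℝ) ≤ 2-φ) (by linarith : (0:ℝ) ≤ φ-1) (by ring)
    have he : ((φ-1, φ-1) : ℝ × ℝ) = (2-φ) • ((0:ℝ), φ) + (φ-1) • ((1:ℝ),(0:ℝ)) := by
      simp only [Prod.smul_mk, Prod.mk_add_mk, smul_eq_mul, Prod.mk.injEq]
      constructor
      · ring
      · linear_combination hφ2
    rw [he]; exact hm
  have huE : (((0:ℝ), (-1:ℝ)) : ℝ × ℝ) ∈ GH := by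
    have hm := hGHc hC hD (by norm_num : (0:ℝ) ≤ 1/2) (by norm_num : (0:ℝ) ≤ 1/2)
      (by norm_num : (1:ℝ)/2 + 1/2 = 1)
    have he : (((0:ℝ), (-1:ℝ)) : ℝ × ℝ)
        = (1/2 : ℝ) • ((1:ℝ),(-1:ℝ)) + (1/2 : ℝ) • ((-1:ℝ),(-1:ℝ)) := by
      simp only [Prod.smul_mk, Prod.mk_add_mk, smul_eq_mul, Prod.mk.injEq]
      constructor
      · ring
      · ring
    rw [he]; exact hm
  -- Part 1
  have hsub : GH ⊆ φ • (-GH) := by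
    apply convexHull_min ?_ ((hGHc.neg).smul φ)
    intro p hp
    simp only [Set.mem_insert_iff, Set.mem_singleton_iff] at hp
    have key : ∀ u : ℝ × ℝ, u ∈ GH → p = φ • (-u) → p ∈ φ • (-GH) := by
      intro u hu hpu
      exact Set.mem_smul_set.mpr ⟨-u, Set.mem_neg.mpr (by simpa using hu), hpu.symm⟩
    rcases hp with rfl | rfl | rfl | rfl | rfl
    · refine key (1-φ, 0) huA ?_
      simp only [Prod.neg_mk, Prod.smul_mk, smul_eq_mul, Prod.mk.injEq, neg_zero, neg_sub]
      constructor
      · linear_combination hφ2 - h5/2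
      · ring
    · refine key (φ-1, 0) huB ?_
      simp only [Prod.neg_mk, Prod.smul_mk, smul_eq_mul, Prod.mk.injEq, neg_zero, neg_sub]
      constructor
      · linear_combination -hφ2 + h5/2
      · ring
    · refine key (1-φ, φ-1) huC ?_
      simp only [Prod.neg_mk, Prod.smul_mk, smul_eq_mul, Prod.mk.injEq, neg_sub]
      constructor
      · linear_combination hφ2 - h5/2
      · linear_combination -hφ2 + h5/2
    · refine key (φ-1, φ-1) huD ?_
      simp only [Prod.neg_mk, Prod.smul_mk, smul_eq_mul, Prod.mk.injEq, neg_sub]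
      constructor
      · linear_combination -hφ2 + h5/2
      · linear_combination -hφ2 + h5/2
    · refine key (0, -1) huE ?_
      simp only [Prod.neg_mk, Prod.smul_mk, smul_eq_mul, Prod.mk.injEq, neg_zero, neg_neg]
      constructor
      · ring
      · ring
  refine ⟨hsub, ?_⟩
  have hmem : φ ∈ {ρ : ℝ | 0 < ρ ∧ ∃ c : ℝ × ℝ, ∀ x ∈ GH, ∃ y ∈ GH, x - c = ρ • (c - y)} := by
    refine ⟨hφ0, 0, fun x hx => ?_⟩
    obtain ⟨w, hw, hweq⟩ := Set.mem_smul_set.mp (hsub hx)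
    exact ⟨-w, Set.mem_neg.mp hw, by simpa using hweq.symm⟩
  have bd1 : ∀ v ∈ GH, (-1:ℝ) ≤ v.2 := by
    intro v hv
    have hcs : Convex ℝ {p : ℝ × ℝ | (-1:ℝ) ≤ p.2} := by
      intro p hp q hq a b ha hb hab
      simp only [Set.mem_setOf_eq, Prod.snd_add, Prod.smul_snd, smul_eq_mul] at *
      nlinarith
    refine convexHull_min ?_ hcs hv
    intro p hp
    simp only [Set.mem_insert_iff, Set.mem_singleton_iff] at hp
    rcases hp with rfl | rfl | rfl | rfl | rfl <;> simp <;> nlinarith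
  have bd2 : ∀ v ∈ GH, φ * v.1 + v.2 ≤ φ := by
    intro v hv
    have hcs : Convex ℝ {p : ℝ × ℝ | φ * p.1 + p.2 ≤ φ} := by
      intro p hp q hq a b ha hb hab
      simp only [Set.mem_setOf_eq, Prod.fst_add, Prod.snd_add, Prod.smul_fst, Prod.smul_snd,
        smul_eq_mul] at *
      nlinarith
    refine convexHull_min ?_ hcs hv
    intro p hp
    simp only [Set.mem_insert_iff, Set.mem_singleton_iff] at hp
    rcases hp with rfl | rfl | rfl | rfl | rfl <;> simp <;> nlinarith
  have bd3 : ∀ v ∈ GH, -φ * v.1 + v.2 ≤ φ := by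
    intro v hv
    have hcs : Convex ℝ {p : ℝ × ℝ | -φ * p.1 + p.2 ≤ φ} := by
      intro p hp q hq a b ha hb hab
      simp only [Set.mem_setOf_eq, Prod.fst_add, Prod.snd_add, Prod.smul_fst, Prod.smul_snd,
        smul_eq_mul] at *
      nlinarith
    refine convexHull_min ?_ hcs hv
    intro p hp
    simp only [Set.mem_insert_iff, Set.mem_singleton_iff] at hp
    rcases hp with rfl | rfl | rfl | rfl | rfl <;> simp <;> nlinarith
  have hlb : ∀ ρ ∈ {ρ : ℝ | 0 < ρ ∧ ∃ c : ℝ × ℝ, ∀ x ∈ GH, ∃ y ∈ GH, x - c = ρ • (c - y)},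
      φ ≤ ρ := by
    rintro ρ ⟨hρ, c, hc⟩
    obtain ⟨y1, hy1, he1⟩ := hc _ hE
    obtain ⟨y2, hy2, he2⟩ := hc _ hD
    obtain ⟨y3, hy3, he3⟩ := hc _ hC
    have e1 : φ - c.2 = ρ * (c.2 - y1.2) := by
      have := congrArg Prod.snd he1; simpa [smul_eq_mul] using this
    have e2a : -1 - c.1 = ρ * (c.1 - y2.1) := by
      have := congrArg Prod.fst he2; simpa [smul_eq_mul] using this
    have e2b : -1 - c.2 = ρ * (c.2 - y2.2) := by
      have := congrArg Prod.snd he2; simpa [smul_eq_mul] using this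
    have e3a : (1:ℝ) - c.1 = ρ * (c.1 - y3.1) := by
      have := congrArg Prod.fst he3; simpa [smul_eq_mul] using this
    have e3b : -1 - c.2 = ρ * (c.2 - y3.2) := by
      have := congrArg Prod.snd he3; simpa [smul_eq_mul] using this
    have b1 := bd1 _ hy1
    have b2 := bd2 _ hy2
    have b3 := bd3 _ hy3
    have i1 : φ - c.2 ≤ ρ * (c.2 + 1) := by nlinarith
    have i2 : -φ - 1 - (φ * c.1 + c.2) ≥ ρ * (φ * c.1 + c.2) - ρ * φ := by nlinarith
    have i3 : -φ - 1 - (-φ * c.1 + c.2) ≥ ρ * (-φ * c.1 + c.2) - ρ * φ := by nlinarith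
    nlinarith [mul_pos hρ hφ0, mul_pos hφ0 hρ]
  have hbdd : BddBelow {ρ : ℝ | 0 < ρ ∧ ∃ c : ℝ × ℝ, ∀ x ∈ GH, ∃ y ∈ GH, x - c = ρ • (c - y)} :=
    ⟨φ, fun ρ hρ => hlb ρ hρ⟩
  exact le_antisymm (csInf_le hbdd hmem) (le_csInf ⟨φ, hmem⟩ hlb)
end

section
/- For the golden house GH = conv{(1,0),(−1,0),(1,−1),(−1,−1),(0,φ)}, the points (1,0) and (−1,0) lie on the boundaries of both GH and −GH, and the vertical slab {x : |x₁| ≤ 1} contains GH while its boundary hyperplanes support GH at (±1,0); consequently α(GH) = 1. -/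
/-! A linear functional `f` with `|f| ≤ c` on `K` and `f p = c` at some `p ∈ K ∩ -K` gives two
parallel supporting lines of `K`, at `p` and `-p`. They bound the slab `|f| ≤ c`, which then contains
`conv (K ∪ -K)`, so `p ∈ ρ • conv (K ∪ -K)` forces `ρ ≥ 1`; and `ρ = 1` always works. For the golden
house the functional is the first coordinate, with `c = 1` and `p = (1, 0)`;
since it is an open map, the points `(±1, 0)` where `|x₁| = 1` cannot be interior to `±GH`. -/

open Set Pointwise

/-- `α(K)`: the smallest `ρ > 0` with `K ∩ (−K) ⊆ ρ · conv(K ∪ (−K))`. -/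
noncomputable def alphaK {V : Type*} [AddCommGroup V] [Module ℝ V] (K : Set V) : ℝ :=
  sInf {ρ : ℝ | 0 < ρ ∧ K ∩ -K ⊆ ρ • convexHull ℝ (K ∪ -K)}

section Slab

variable {E : Type*} [AddCommGroup E] [Module ℝ E] (f : E →ₗ[ℝ] ℝ) {c : ℝ}

theorem abs_le_of_mem_convexHull {s : Set E} (hs : ∀ x ∈ s, |f x| ≤ c) {x : E}
    (hx : x ∈ convexHull ℝ s) : |f x| ≤ c := by
  have hslab : Convex ℝ (f ⁻¹' Icc (-c) c) := (convex_Icc _ _).linear_preimage f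
  exact abs_le.mpr (convexHull_min (fun y hy => abs_le.mp (hs y hy)) hslab hx)

theorem abs_le_of_mem_neg {s : Set E} (hs : ∀ x ∈ s, |f x| ≤ c) {x : E} (hx : x ∈ -s) :
    |f x| ≤ c := by
  simpa using hs (-x) hx

theorem inter_neg_subset_one_smul_convexHull (K : Set E) :
    K ∩ -K ⊆ (1 : ℝ) • convexHull ℝ (K ∪ -K) := by
  rw [one_smul]
  exact inter_subset_left.trans (subset_union_left.trans (subset_convexHull ℝ _))

theorem alphaK_le_one (K : Set E) : alphaK K ≤ 1 :=
  csInf_le ⟨0, fun _ hρ => hρ.1.le⟩ ⟨one_pos, inter_neg_subset_one_smul_convexHull K⟩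

theorem one_le_alphaK_of_abs_le {K : Set E} (hK : ∀ x ∈ K, |f x| ≤ c) {p : E} (hp : p ∈ K)
    (hnp : -p ∈ K) (hfp : f p = c) (hc : 0 < c) : 1 ≤ alphaK K := by
  refine le_csInf ⟨1, one_pos, inter_neg_subset_one_smul_convexHull K⟩ ?_
  rintro ρ ⟨hρ, hsub⟩
  obtain ⟨y, hy, rfl⟩ := hsub ⟨hp, by simpa using hnp⟩
  have hfy : f y ≤ c := (abs_le.mp (abs_le_of_mem_convexHull f
    (fun x hx => hx.elim (hK x) (abs_le_of_mem_neg f hK)) hy)).2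
  rw [map_smul, smul_eq_mul] at hfp
  nlinarith

theorem alphaK_eq_one_of_abs_le {K : Set E} (hK : ∀ x ∈ K, |f x| ≤ c) {p : E} (hp : p ∈ K)
    (hnp : -p ∈ K) (hfp : f p = c) (hc : 0 < c) : alphaK K = 1 :=
  (alphaK_le_one K).antisymm (one_le_alphaK_of_abs_le f hK hp hnp hfp hc)

end Slab

theorem notMem_interior_of_abs_eq {X : Type*} [TopologicalSpace X] {g : X → ℝ}
    (hg : IsOpenMap g) {S : Set X} {c : ℝ} (hS : ∀ x ∈ S, |g x| ≤ c) {p : X} (hp : |g p| = c) :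
    p ∉ interior S := by
  intro hpS
  have hgS : g '' S ⊆ Icc (-c) c := by
    rintro _ ⟨x, hx, rfl⟩
    exact abs_le.mp (hS x hx)
  have : g p ∈ Ioo (-c) c :=
    interior_Icc (a := -c) ▸ interior_mono hgS (hg.image_interior_subset S ⟨p, hpS, rfl⟩)
  exact (abs_lt.mpr this).ne hp

theorem mem_frontier_of_abs_eq {X : Type*} [TopologicalSpace X] {g : X → ℝ}
    (hg : IsOpenMap g) {S : Set X} (hS : IsClosed S) {c : ℝ} (hSc : ∀ x ∈ S, |g x| ≤ c) {p : X}
    (hpS : p ∈ S) (hp : |g p| = c) : p ∈ frontier S := by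
  rw [frontier, hS.closure_eq]
  exact ⟨hpS, notMem_interior_of_abs_eq hg hSc hp⟩

/-- For the golden house `GH`, the points `(1,0)` and `(−1,0)` lie on the
boundaries of both `GH` and `−GH`, the vertical slab `{x : |x₁| ≤ 1}` contains `GH`
(its boundary lines supporting `GH` at `(±1,0)`, which belong to `GH`); consequently
`α(GH) = 1`. -/
theorem goldenHouse_alpha_eq_one :
    let φ : ℝ := (1 + Real.sqrt 5) / 2
    let GH : Set (ℝ × ℝ) :=
      convexHull ℝ {((1 : ℝ), (0 : ℝ)), (-1, 0), (1, -1), (-1, -1), (0, φ)}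
    ((1 : ℝ), (0 : ℝ)) ∈ frontier GH ∩ frontier (-GH) ∧
      ((-1 : ℝ), (0 : ℝ)) ∈ frontier GH ∩ frontier (-GH) ∧
      (∀ x ∈ GH, |x.1| ≤ 1) ∧
      ((1 : ℝ), (0 : ℝ)) ∈ GH ∧ ((-1 : ℝ), (0 : ℝ)) ∈ GH ∧
      alphaK GH = 1 := by
  intro φ GH
  have hslab : ∀ x ∈ GH, |x.1| ≤ 1 :=
    fun x => abs_le_of_mem_convexHull (LinearMap.fst ℝ ℝ ℝ) (by simp)
  have hclosed : IsClosed GH := (toFinite _).isCompact_convexHull (𝕜 := ℝ) |>.isClosed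
  have hmem1 : ((1 : ℝ), (0 : ℝ)) ∈ GH := subset_convexHull ℝ _ (by simp)
  have hmem2 : ((-1 : ℝ), (0 : ℝ)) ∈ GH := subset_convexHull ℝ _ (by simp)
  have hfrontier : ∀ p : ℝ × ℝ, |p.1| = 1 → p ∈ GH → -p ∈ GH →
      p ∈ frontier GH ∩ frontier (-GH) := fun p hp hpGH hnpGH =>
    ⟨mem_frontier_of_abs_eq isOpenMap_fst hclosed hslab hpGH hp,
      mem_frontier_of_abs_eq isOpenMap_fst hclosed.neg
        (fun x => abs_le_of_mem_neg (LinearMap.fst ℝ ℝ ℝ) hslab) (by simpa using hnpGH) hp⟩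
  refine ⟨hfrontier _ (by simp) hmem1 (by simpa using hmem2),
    hfrontier _ (by simp) hmem2 (by simpa using hmem1), hslab, hmem1, hmem2, ?_⟩
  exact alphaK_eq_one_of_abs_le (LinearMap.fst ℝ ℝ ℝ) hslab hmem1 (by simpa using hmem2) rfl
    one_pos
end

section
/- For s ∈ (φ, 2], let f(a) = (1/2)(1/α − α((a−1)/(a+1))² + sqrt(4 + (α((a−1)/(a+1))² − 1/α)²)) for fixed α ∈ [2/3, 1]. Then f is nondecreasing on (0,1] and its maximum value at a = 1 equals 1/(2α) + sqrt(1 + 1/(4α²)). -/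
open Set

lemma sqrt_sub_antitone (x y : ℝ) (hxy : x ≤ y) :
    Real.sqrt (4 + y ^ 2) - y ≤ Real.sqrt (4 + x ^ 2) - x := by
  have hx4 : (0:ℝ) ≤ 4 + x ^ 2 := by positivity
  have hy4 : (0:ℝ) ≤ 4 + y ^ 2 := by positivity
  set sx := Real.sqrt (4 + x ^ 2) with hsx
  set sy := Real.sqrt (4 + y ^ 2) with hsy
  have hsx2 : sx ^ 2 = 4 + x ^ 2 := Real.sq_sqrt hx4
  have hsy2 : sy ^ 2 = 4 + y ^ 2 := Real.sq_sqrt hy4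
  have hsxn : 0 ≤ sx := Real.sqrt_nonneg _
  have hsyn : 0 ≤ sy := Real.sqrt_nonneg _
  have hxle : x ≤ sx := by
    refine le_trans (le_abs_self x) ?_
    rw [← Real.sqrt_sq_eq_abs]
    exact Real.sqrt_le_sqrt (by nlinarith)
  have hyle : y ≤ sy := by
    refine le_trans (le_abs_self y) ?_
    rw [← Real.sqrt_sq_eq_abs]
    exact Real.sqrt_le_sqrt (by nlinarith)
  have hpos : 0 < sx + sy := by nlinarith
  nlinarith [mul_nonneg (sub_nonneg.2 hxy) (sub_nonneg.2 (add_le_add hxle hyle))]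

/-- For fixed `α ∈ [2/3, 1]`, the function
`f(a) = (1/2)(1/α − α((a−1)/(a+1))² + √(4 + (α((a−1)/(a+1))² − 1/α)²))`
is nondecreasing on `(0,1]` and its maximum value at `a = 1` equals
`1/(2α) + √(1 + 1/(4α²))`. -/
theorem asym_bound_function_monotone (α : ℝ) (hα : α ∈ Set.Icc (2 / 3 : ℝ) 1) :
    let f : ℝ → ℝ := fun a =>
      (1 / 2) * (1 / α - α * ((a - 1) / (a + 1)) ^ 2 +
        Real.sqrt (4 + (α * ((a - 1) / (a + 1)) ^ 2 - 1 / α) ^ 2))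
    MonotoneOn f (Set.Ioc 0 1) ∧
      f 1 = 1 / (2 * α) + Real.sqrt (1 + 1 / (4 * α ^ 2)) := by
  obtain ⟨hα1, hα2⟩ := hα
  have hαpos : 0 < α := by linarith
  intro f
  constructor
  · intro a ha b hb hab
    obtain ⟨ha0, ha1⟩ := ha
    obtain ⟨hb0, hb1⟩ := hb
    set ta := α * ((a - 1) / (a + 1)) ^ 2 with hta
    set tb := α * ((b - 1) / (b + 1)) ^ 2 with htb
    have hap : (0:ℝ) < a + 1 := by linarith
    have hbp : (0:ℝ) < b + 1 := by linarith
    have hfrac : (1 - b) / (b + 1) ≤ (1 - a) / (a + 1) := by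
      rw [div_le_div_iff₀ hbp hap]; nlinarith
    have hfb : (0:ℝ) ≤ (1 - b) / (b + 1) := div_nonneg (by linarith) (by linarith)
    have hsq : ((b - 1) / (b + 1)) ^ 2 ≤ ((a - 1) / (a + 1)) ^ 2 := by
      have h1 : ((b - 1) / (b + 1)) ^ 2 = ((1 - b) / (b + 1)) ^ 2 := by ring
      have h2 : ((a - 1) / (a + 1)) ^ 2 = ((1 - a) / (a + 1)) ^ 2 := by ring
      rw [h1, h2]
      exact pow_le_pow_left₀ hfb hfrac 2
    have htle : tb ≤ ta := by
      apply mul_le_mul_of_nonneg_left hsq (le_of_lt hαpos)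
    have key := sqrt_sub_antitone (tb - 1 / α) (ta - 1 / α) (by linarith)
    have e1 : 4 + (ta - 1 / α) ^ 2 = 4 + (α * ((a - 1) / (a + 1)) ^ 2 - 1 / α) ^ 2 := by
      rw [hta]
    have e2 : 4 + (tb - 1 / α) ^ 2 = 4 + (α * ((b - 1) / (b + 1)) ^ 2 - 1 / α) ^ 2 := by
      rw [htb]
    show (1 / 2) * (1 / α - ta + Real.sqrt (4 + (ta - 1/α) ^ 2)) ≤
      (1 / 2) * (1 / α - tb + Real.sqrt (4 + (tb - 1/α) ^ 2))
    linarith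
  · show (1 / 2) * (1 / α - α * ((1 - 1) / (1 + 1)) ^ 2 +
        Real.sqrt (4 + (α * ((1 - 1) / (1 + 1)) ^ 2 - 1 / α) ^ 2)) = _
    have hαne : α ≠ 0 := ne_of_gt hαpos
    have h1 : (4:ℝ) + (α * ((1 - 1) / (1 + 1)) ^ 2 - 1 / α) ^ 2
        = 2 ^ 2 * (1 + 1 / (4 * α ^ 2)) := by
      field_simp; ring
    rw [h1, Real.sqrt_mul (by norm_num), Real.sqrt_sq (by norm_num)]
    have : α * ((1 - 1) / (1 + 1)) ^ 2 = 0 := by norm_num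
    rw [this]
    field_simp
    ring
end
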